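/- In the group G_4 = ⟨s, t ∣ s³ = t³ = 1, sts = tst⟩, the element ts²t commutes with s, and consequently the double coset ⟨s⟩(ts²t)⟨s⟩ equals {ts²t, ts²ts, ts²ts²} and has exactly 3 elements. -/

import Mathlib

def G4rels : Set (FreeGroup (Fin 2)) :=
  { (FreeGroup.of 0) ^ 3, (FreeGroup.of 1) ^ 3,
    (FreeGroup.of 0 * FreeGroup.of 1 * FreeGroup.of 0) *
      (FreeGroup.of 1 * FreeGroup.of 0 * FreeGroup.of 1)⁻¹ }

abbrev G4 : Type := PresentedGroup G4rels

def s : G4 := PresentedGroup.of 0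
def t : G4 := PresentedGroup.of 1

lemma rel_one {r : FreeGroup (Fin 2)} (hr : r ∈ G4rels) :
    (QuotientGroup.mk r : G4) = 1 :=
  (QuotientGroup.eq_one_iff r).mpr (Subgroup.subset_normalClosure hr)

lemma hs3 : s ^ 3 = 1 := by
  have := rel_one (by left; rfl)
  simp [s, PresentedGroup.of] at this
  exact this

lemma ht3 : t ^ 3 = 1 := by
  have := rel_one (by right; left; rfl)
  simp [t, PresentedGroup.of] at this
  exact this

lemma braid : s * t * s = t * s * t := by
  have := rel_one (by right; right; rfl)
  have h : (QuotientGroup.mk (FreeGroup.of 0 * FreeGroup.of 1 * FreeGroup.of 0) : G4)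
      * (QuotientGroup.mk (FreeGroup.of 1 * FreeGroup.of 0 * FreeGroup.of 1) : G4)⁻¹ = 1 := by
    simpa using this
  have := mul_inv_eq_one.mp h
  simp [s, t, PresentedGroup.of] at this
  exact this

def f : Fin 2 → Multiplicative (ZMod 3) := fun _ => Multiplicative.ofAdd 1

lemma frels : ∀ r ∈ G4rels, FreeGroup.lift f r = 1 := by
  intro r hr
  rcases hr with h | h | h <;> subst h <;> simp [f] <;> decide

def φ : G4 →* Multiplicative (ZMod 3) := PresentedGroup.toGroup frels

lemma φs : φ s = Multiplicative.ofAdd 1 := PresentedGroup.toGroup.of frels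
lemma φt : φ t = Multiplicative.ofAdd 1 := PresentedGroup.toGroup.of frels

/-- In G₄, ts²t commutes with s, the double coset ⟨s⟩(ts²t)⟨s⟩ equals
{ts²t, ts²ts, ts²ts²}, and it has exactly 3 elements. -/
theorem ts2t_coset :
    (t * s ^ 2 * t) * s = s * (t * s ^ 2 * t) ∧
    {x : G4 | ∃ i j : ℕ, i ≤ 2 ∧ j ≤ 2 ∧ x = s ^ i * (t * s ^ 2 * t) * s ^ j} =
      ({t * s ^ 2 * t, t * s ^ 2 * t * s, t * s ^ 2 * t * s ^ 2} : Set G4) ∧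
    ({t * s ^ 2 * t, t * s ^ 2 * t * s, t * s ^ 2 * t * s ^ 2} : Set G4).ncard = 3 := by
  have comm : (t * s ^ 2 * t) * s = s * (t * s ^ 2 * t) := by
    have h1 : t * s ^ 2 * t * s = t * s * (s * t * s) := by
      simp [pow_two, mul_assoc]
    have h2 : s * (t * s ^ 2 * t) = (s * t * s) * (s * t) := by
      simp [pow_two, mul_assoc]
    rw [h1, h2, braid]
    group
  refine ⟨comm, ?_, ?_⟩
  · ext x
    simp only [Set.mem_setOf_eq, Set.mem_insert_iff, Set.mem_singleton_iff]
    constructor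
    · rintro ⟨i, j, hi, hj, rfl⟩
      have key : ∀ k : ℕ, s ^ k * (t * s ^ 2 * t) = (t * s ^ 2 * t) * s ^ k := by
        intro k
        induction k with
        | zero => simp
        | succ n ih =>
          rw [pow_succ, mul_assoc, ← comm, ← mul_assoc, ih, mul_assoc]
      rw [key i, mul_assoc, ← pow_add]
      have : s ^ (i + j) = s ^ ((i + j) % 3) := by
        conv_lhs => rw [← Nat.div_add_mod (i + j) 3, pow_add, pow_mul, hs3, one_pow, one_mul]
      rw [this]
      interval_cases i <;> interval_cases j <;> simp
    · rintro (rfl | rfl | rfl)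
      · exact ⟨0, 0, by simp, by simp, by simp⟩
      · exact ⟨0, 1, by simp, by simp, by simp⟩
      · exact ⟨0, 2, by simp, by simp, by simp⟩
  · have hφ : ∀ x : G4, φ x ≠ φ x * Multiplicative.ofAdd 1 := by
      intro x h
      have h1 : φ x * 1 = φ x * Multiplicative.ofAdd 1 := by rw [mul_one]; exact h
      exact absurd (mul_left_cancel h1) (by decide)
    have d12 : (t * s ^ 2 * t : G4) ≠ t * s ^ 2 * t * s := by
      intro h
      apply hφ (t * s ^ 2 * t)
      calc φ (t * s ^ 2 * t) = φ (t * s ^ 2 * t * s) := by rw [← h]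
        _ = φ (t * s ^ 2 * t) * Multiplicative.ofAdd 1 := by rw [map_mul, φs]
    have d23 : (t * s ^ 2 * t * s : G4) ≠ t * s ^ 2 * t * s ^ 2 := by
      intro h
      apply hφ (t * s ^ 2 * t * s)
      calc φ (t * s ^ 2 * t * s) = φ (t * s ^ 2 * t * s ^ 2) := by rw [← h]
        _ = φ (t * s ^ 2 * t * s) * Multiplicative.ofAdd 1 := by
            rw [pow_two, ← mul_assoc, map_mul, φs]
    have d13 : (t * s ^ 2 * t : G4) ≠ t * s ^ 2 * t * s ^ 2 := by
      intro h
      have : φ (t * s ^ 2 * t) = φ (t * s ^ 2 * t) * (Multiplicative.ofAdd 1 * Multiplicative.ofAdd 1) := by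
        conv_lhs => rw [h]
        rw [map_mul, map_pow, φs, mul_assoc]
        rfl
      have h2 := mul_left_cancel (a := φ (t * s ^ 2 * t)) (by simpa using this)
      exact absurd h2.symm (by decide)
    rw [Set.ncard_eq_three]
    exact ⟨_, _, _, d12, d13, d23, rfl⟩
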